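/- arXiv:2601.03360 — 3 statements merged into one kernel-verified Lean document; each statement's English description precedes it below -/
import Mathlib

section
/- For a block upper-triangular matrix Ω = [[Ψ, M], [0, 0]] (with Ψ an n×n matrix, M an n×m matrix, and zero blocks of appropriate size), the matrix exponential is exp(Ω) = [[exp(Ψ), J(Ψ)·M], [0, I]], where J(Ψ) = Σ_{k≥0} Ψ^k/(k+1)! is the 'left Jacobian' series. -/
/-!
Since `Ω ^ (k + 1) = [[Ψ ^ (k + 1), Ψ ^ k * M], [0, 0]]`, the exponential series of `Ω` without its
constant term splits blockwise into the series `Σ Ψ ^ (k + 1) / (k + 1)! = exp Ψ - 1` and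
`Σ Ψ ^ k M / (k + 1)! = J(Ψ) M`; adding back the identity gives the claim.
-/

open Matrix

attribute [local instance] Matrix.linftyOpNormedRing Matrix.linftyOpNormedAlgebra

/-- The 'left Jacobian' series `J(Ψ) = Σ_{k≥0} Ψ^k/(k+1)!`. -/
noncomputable def leftJacobian {n : ℕ} (Ψ : Matrix (Fin n) (Fin n) ℝ) :
    Matrix (Fin n) (Fin n) ℝ :=
  ∑' k : ℕ, (((k + 1).factorial : ℝ))⁻¹ • Ψ ^ k

open Nat NormedSpace

section ExpSeries

variable {𝕂 𝔸 : Type*} [RCLike 𝕂] [NormedRing 𝔸] [NormedAlgebra 𝕂 𝔸] [CompleteSpace 𝔸]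

theorem summable_inv_factorial_succ_smul_pow (x : 𝔸) :
    Summable fun k : ℕ => ((k + 1)! : 𝕂)⁻¹ • x ^ k := by
  refine .of_norm_bounded (norm_expSeries_summable' (𝕂 := 𝕂) x) fun k => ?_
  rw [norm_smul, norm_smul]
  gcongr
  rw [norm_inv, norm_inv, RCLike.norm_natCast, RCLike.norm_natCast]
  gcongr
  exact k.le_succ

theorem hasSum_exp_sub_one (x : 𝔸) :
    HasSum (fun k : ℕ => ((k + 1)! : 𝕂)⁻¹ • x ^ (k + 1)) (exp x - 1) := by
  simpa using (hasSum_nat_add_iff' 1).mpr (exp_series_hasSum_exp' (𝕂 := 𝕂) x)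

end ExpSeries

section MatrixSeries

variable {X l m n o R : Type*} {L : SummationFilter X}

theorem fromBlocks_zero_zero_pow_succ [Fintype m] [Fintype n] [DecidableEq m] [DecidableEq n]
    [Semiring R] (A : Matrix m m R) (B : Matrix m n R) (k : ℕ) :
    fromBlocks A B (0 : Matrix n m R) 0 ^ (k + 1) = fromBlocks (A ^ (k + 1)) (A ^ k * B) 0 0 := by
  induction k with
  | zero => simp
  | succ k ih =>
    rw [pow_succ, ih, fromBlocks_multiply]
    simp [pow_succ, Matrix.mul_assoc]

theorem HasSum.matrix_fromBlocks [AddCommMonoid R] [TopologicalSpace R]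
    {A : X → Matrix n l R} {B : X → Matrix n m R} {C : X → Matrix o l R} {D : X → Matrix o m R}
    {a : Matrix n l R} {b : Matrix n m R} {c : Matrix o l R} {d : Matrix o m R}
    (hA : HasSum A a L) (hB : HasSum B b L) (hC : HasSum C c L) (hD : HasSum D d L) :
    HasSum (fun x => fromBlocks (A x) (B x) (C x) (D x)) (fromBlocks a b c d) L := by
  refine Pi.hasSum.mpr fun i => Pi.hasSum.mpr fun j => ?_
  rcases i with i | i <;> rcases j with j | j
  · exact Pi.hasSum.mp (Pi.hasSum.mp hA i) j
  · exact Pi.hasSum.mp (Pi.hasSum.mp hB i) j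
  · exact Pi.hasSum.mp (Pi.hasSum.mp hC i) j
  · exact Pi.hasSum.mp (Pi.hasSum.mp hD i) j

theorem HasSum.matrix_mul_right [Fintype n] [NonUnitalNonAssocSemiring R] [TopologicalSpace R]
    [IsTopologicalSemiring R] {f : X → Matrix l n R} {a : Matrix l n R} (hf : HasSum f a L)
    (B : Matrix n m R) : HasSum (fun x => f x * B) (a * B) L :=
  hf.map (addMonoidHomMulRight B) (continuous_id.matrix_mul continuous_const)

end MatrixSeries

theorem hasSum_leftJacobian {n : ℕ} (Ψ : Matrix (Fin n) (Fin n) ℝ) :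
    HasSum (fun k : ℕ => ((k + 1)! : ℝ)⁻¹ • Ψ ^ k) (leftJacobian Ψ) :=
  (summable_inv_factorial_succ_smul_pow Ψ).hasSum

/-- For the block upper-triangular matrix `Ω = [[Ψ, M], [0, 0]]`,
`exp(Ω) = [[exp(Ψ), J(Ψ)·M], [0, I]]`. -/
theorem exp_block_upper_triangular {n m : ℕ}
    (Ψ : Matrix (Fin n) (Fin n) ℝ) (M : Matrix (Fin n) (Fin m) ℝ) :
    NormedSpace.exp (Matrix.fromBlocks Ψ M 0 0) =
      Matrix.fromBlocks (NormedSpace.exp Ψ) (leftJacobian Ψ * M)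
        (0 : Matrix (Fin m) (Fin n) ℝ) (1 : Matrix (Fin m) (Fin m) ℝ) := by
  have hΩ := hasSum_exp_sub_one (𝕂 := ℝ) (fromBlocks Ψ M (0 : Matrix (Fin m) (Fin n) ℝ) 0)
  simp only [fromBlocks_zero_zero_pow_succ, fromBlocks_smul, smul_zero, ← Matrix.smul_mul] at hΩ
  have hblocks := hΩ.unique <| .matrix_fromBlocks (hasSum_exp_sub_one Ψ)
    ((hasSum_leftJacobian Ψ).matrix_mul_right M) hasSum_zero hasSum_zero
  refine (sub_eq_iff_eq_add.mp hblocks).trans ?_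
  rw [← fromBlocks_one, fromBlocks_add]
  simp
  -- the two sides differ only in the ring instance under `exp Ψ` (`linftyOpNormedRing` vs `instRing`)
  rfl
end

section
/- Let ψ be a vector-valued polynomial function of (ϖ₁, ϖ₂) built from right-nested applications of the adjoint operator, and suppose Ω_n = [[ψ_n^⌣, M_n],[0,0]] with M_n = ∂ψ_n/∂ϖ₂ + ∂ψ_n/∂ϖ₁. If ψ_{n+1} = (w₁ϖ₁ + w₂ϖ₂)^⌣ ψ_n and Ω_{n+1} = [w₁A₁ + w₂A₂, Ω_n] where A_i = [[ϖ_i^⌣, I],[0,0]], then Ω_{n+1} = [[ψ_{n+1}^⌣, M_{n+1}],[0,0]] with M_{n+1} = (w₁ϖ₁ + w₂ϖ₂)^⌣ M_n − (w₁+w₂) ψ_n^⌣, where M_{n+1} = ∂ψ_{n+1}/∂ϖ₂ + ∂ψ_{n+1}/∂ϖ₁. -/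
open Matrix

theorem Matrix.fromBlocks_zero_zero_commutator {n m R : Type*} [Fintype n] [Fintype m] [Ring R]
    (X P : Matrix n n R) (Y Q : Matrix n m R) :
    fromBlocks X Y (0 : Matrix m n R) 0 * fromBlocks P Q 0 0 -
        fromBlocks P Q 0 0 * fromBlocks X Y 0 0 =
      fromBlocks (X * P - P * X) (X * Q - P * Y) 0 0 := by
  simp only [fromBlocks_multiply, Matrix.mul_zero, Matrix.zero_mul, add_zero, sub_eq_add_neg,
    fromBlocks_neg, fromBlocks_add, neg_zero]

/-- Induction step of the commutative-diagram equivalence: if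
`Ωₙ = [[ψₙ^⌣, Mₙ],[0,0]]`, then with `ψ_{n+1} = (w₁ϖ₁ + w₂ϖ₂)^⌣ ψₙ` we have
`[w₁A₁ + w₂A₂, Ωₙ] = [[ψ_{n+1}^⌣, M_{n+1}],[0,0]]` where
`M_{n+1} = (w₁ϖ₁ + w₂ϖ₂)^⌣ Mₙ − (w₁+w₂) ψₙ^⌣`. -/
theorem magnus_block_induction_step {d : ℕ}
    (hat : (Fin d → ℝ) →ₗ[ℝ] Matrix (Fin d) (Fin d) ℝ)
    (hhom : ∀ u v : Fin d → ℝ, hat (hat u *ᵥ v) = hat u * hat v - hat v * hat u)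
    (ϖ₁ ϖ₂ : Fin d → ℝ) (w₁ w₂ : ℝ) (ψn : Fin d → ℝ)
    (Mn : Matrix (Fin d) (Fin d) ℝ)
    (A₁ A₂ Ωn : Matrix (Fin d ⊕ Fin d) (Fin d ⊕ Fin d) ℝ)
    (hA₁ : A₁ = Matrix.fromBlocks (hat ϖ₁) 1 0 0)
    (hA₂ : A₂ = Matrix.fromBlocks (hat ϖ₂) 1 0 0)
    (hΩn : Ωn = Matrix.fromBlocks (hat ψn) Mn 0 0) :
    (w₁ • A₁ + w₂ • A₂) * Ωn - Ωn * (w₁ • A₁ + w₂ • A₂) =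
      Matrix.fromBlocks (hat (hat (w₁ • ϖ₁ + w₂ • ϖ₂) *ᵥ ψn))
        (hat (w₁ • ϖ₁ + w₂ • ϖ₂) * Mn - (w₁ + w₂) • hat ψn) 0 0 := by
  have hA : w₁ • A₁ + w₂ • A₂ = fromBlocks (hat (w₁ • ϖ₁ + w₂ • ϖ₂)) ((w₁ + w₂) • 1) 0 0 := by
    simp only [hA₁, hA₂, fromBlocks_smul, fromBlocks_add, map_add, map_smul, add_smul, smul_zero,
      add_zero]
  rw [hA, hΩn, fromBlocks_zero_zero_commutator, hhom, mul_smul_comm, Matrix.mul_one]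
end

section
/- If Q_c is a symmetric positive definite d×d matrix and h > 0, then the 2d×2d block matrix Q = [[(h³/3)Q_c, (h²/2)Q_c],[(h²/2)Q_c, h·Q_c]] is symmetric positive definite. -/
/-!
The block matrix is, up to reordering of indices, the Kronecker product `M ⊗ Q_c` with
`M = [[h³/3, h²/2], [h²/2, h]]`. Its leading entry `h³/3` and its determinant `h⁴/12` are
positive, so `M` is positive definite, and Kronecker products of positive definite matrices are
positive definite.
-/

open Matrix
open scoped Kronecker ComplexOrder

theorem Matrix.posDef_fin_two_of_pos_of_sq_lt_mul {a b c : ℝ} (ha : 0 < a)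
    (hdet : b ^ 2 < a * c) :
    (!![a, b; b, c]).PosDef := by
  rw [posDef_iff_dotProduct_mulVec]
  refine ⟨by ext i j; fin_cases i <;> fin_cases j <;> rfl, fun x hx => ?_⟩
  simp only [star_trivial, dotProduct, mulVec, Fin.sum_univ_two, of_apply, cons_val',
    cons_val_zero, cons_val_one, empty_val', cons_val_fin_one]
  have complete_square : a * (x 0 * (a * x 0 + b * x 1) + x 1 * (b * x 0 + c * x 1)) =
      (a * x 0 + b * x 1) ^ 2 + (a * c - b ^ 2) * x 1 ^ 2 := by ring
  refine pos_of_mul_pos_right ?_ ha.le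
  rw [complete_square]
  by_cases h1 : x 1 = 0
  · have h0 : x 0 ≠ 0 := fun h0 => hx (funext fun i => by fin_cases i <;> simp [h0, h1])
    have := mul_ne_zero ha.ne' h0
    simp only [h1, mul_zero, add_zero]
    positivity
  · have := sub_pos.2 hdet
    positivity

theorem Matrix.fromBlocks_smul_eq_submatrix_kronecker {R n : Type*} [Semiring R]
    (Q : Matrix n n R) (a b c d : R) :
    fromBlocks (a • Q) (b • Q) (c • Q) (d • Q) =
      (!![a, b; c, d] ⊗ₖ Q).submatrix (Sum.elim (Prod.mk 0) (Prod.mk 1))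
        (Sum.elim (Prod.mk 0) (Prod.mk 1)) := by
  ext (i | i) (j | j) <;> simp

theorem Matrix.PosDef.fromBlocks_smul {𝕜 n : Type*} [RCLike 𝕜] [Finite n] {Q : Matrix n n 𝕜}
    (hQ : Q.PosDef) {a b c : 𝕜} (hM : (!![a, b; b, c]).PosDef) :
    (fromBlocks (a • Q) (b • Q) (b • Q) (c • Q)).PosDef := by
  rw [fromBlocks_smul_eq_submatrix_kronecker]
  refine (hM.kronecker hQ).submatrix <|
    (Prod.mk_right_injective 0).sumElim (Prod.mk_right_injective 1) ?_
  simp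

/-- If `Q_c` is symmetric positive definite and `h > 0`, then the block matrix
`Q = [[(h³/3)Q_c, (h²/2)Q_c],[(h²/2)Q_c, h·Q_c]]` is (symmetric) positive definite. -/
theorem wnoa_process_noise_posDef {d : ℕ}
    (Qc : Matrix (Fin d) (Fin d) ℝ) (hQc : Qc.PosDef) (h : ℝ) (hh : 0 < h) :
    (Matrix.fromBlocks ((h ^ 3 / 3) • Qc) ((h ^ 2 / 2) • Qc)
        ((h ^ 2 / 2) • Qc) (h • Qc)).PosDef := by
  refine hQc.fromBlocks_smul (posDef_fin_two_of_pos_of_sq_lt_mul (by positivity) ?_)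
  have : (h ^ 2 / 2) ^ 2 + h ^ 4 / 12 = h ^ 3 / 3 * h := by ring
  linarith [pow_pos hh 4]
end
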